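/- With notation as in the Lawson reflection group G = ⟨(A,A),(B,I),(I,C)⟩ ⊂ O(4), every element of G admits a unique expression of the form (A,A)^i (B,I)^j (I,C)^ℓ with i ∈ {0,1}, 0 ≤ j ≤ k, 0 ≤ ℓ ≤ m. -/

import Mathlib

/-! Conjugation by `a = (A,A)` inverts the rotations `b = (B,I)` and `c = (I,C)`, which commute,
so every word in `a, b, c` can be rewritten as `a^i b^j c^l`, and the orders `2, k+1, m+1` bound
the exponents. For uniqueness, the determinant of the first block of `a^i b^j c^l` is `(-1)^i`,
and the rotation by `2π/n` has order exactly `n`: it is the image of the primitive root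
`exp (2πi/n)` under the regular representation `ℂ → M₂(ℝ)`. -/

open Real Matrix

section DihedralWords

variable {G : Type*} [Group G] {a b c : G}

theorem zpow_mul_zpow_mul_eq_mul_zpow_neg (ha : a ^ 2 = 1) (hab : (a * b) ^ 2 = 1)
    (hac : (a * c) ^ 2 = 1) (j l : ℤ) :
    b ^ j * c ^ l * a = a * b ^ (-j) * c ^ (-l) := by
  have ha' : a⁻¹ = a := inv_eq_of_mul_eq_one_right (by rwa [← sq])
  have conj_eq_inv {x : G} (hx : (a * x) ^ 2 = 1) : MulAut.conj a x = x⁻¹ := by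
    rw [MulAut.conj_apply, ha']
    exact eq_inv_of_mul_eq_one_left (by rwa [sq, ← mul_assoc] at hx)
  have h : MulAut.conj a (b ^ j * c ^ l) = b ^ (-j) * c ^ (-l) := by
    rw [map_mul, map_zpow, map_zpow, conj_eq_inv hab, conj_eq_inv hac, _root_.inv_zpow',
      _root_.inv_zpow']
  rw [MulAut.conj_apply, ha'] at h
  calc b ^ j * c ^ l * a = a * (a * (b ^ j * c ^ l) * a) := by
        rw [← mul_assoc, ← mul_assoc, ← sq, ha, one_mul, mul_assoc]
    _ = a * b ^ (-j) * c ^ (-l) := by rw [h, mul_assoc]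

theorem exists_eq_zpow_mul_zpow_mul_zpow_of_mem_closure (ha : a ^ 2 = 1)
    (hab : (a * b) ^ 2 = 1) (hac : (a * c) ^ 2 = 1) (hbc : Commute b c) {g : G}
    (hg : g ∈ Subgroup.closure {a, b, c}) : ∃ i j l : ℤ, g = a ^ i * b ^ j * c ^ l := by
  have ha' : a⁻¹ = a := inv_eq_of_mul_eq_one_right (by rwa [← sq])
  have mul_a (i j l : ℤ) : a ^ i * b ^ j * c ^ l * a = a ^ (i + 1) * b ^ (-j) * c ^ (-l) := by
    rw [mul_assoc (a ^ i * b ^ j), mul_assoc (a ^ i), ← mul_assoc (b ^ j),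
      zpow_mul_zpow_mul_eq_mul_zpow_neg ha hab hac, _root_.zpow_add_one]
    simp only [mul_assoc]
  have mul_b (i j l n : ℤ) : a ^ i * b ^ j * c ^ l * b ^ n = a ^ i * b ^ (j + n) * c ^ l := by
    rw [mul_assoc, ← ((hbc.zpow_right l).zpow_left n).eq, ← mul_assoc, mul_assoc (a ^ i),
      ← _root_.zpow_add]
  have mul_c (i j l n : ℤ) : a ^ i * b ^ j * c ^ l * c ^ n = a ^ i * b ^ j * c ^ (l + n) := by
    rw [mul_assoc, ← _root_.zpow_add]
  induction hg using Subgroup.closure_induction_right with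
  | one => exact ⟨0, 0, 0, by simp⟩
  | mul_right x _ y hy ih =>
    obtain ⟨i, j, l, rfl⟩ := ih
    rcases hy with rfl | rfl | rfl
    · exact ⟨_, _, _, mul_a i j l⟩
    · exact ⟨_, _, _, by simpa using mul_b i j l 1⟩
    · exact ⟨_, _, _, by simpa using mul_c i j l 1⟩
  | mul_inv_cancel x _ y hy ih =>
    obtain ⟨i, j, l, rfl⟩ := ih
    rcases hy with rfl | rfl | rfl
    · exact ⟨_, _, _, by rw [ha']; exact mul_a i j l⟩
    · exact ⟨_, _, _, by simpa using mul_b i j l (-1)⟩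
    · exact ⟨_, _, _, by simpa using mul_c i j l (-1)⟩

theorem exists_fin_pow_eq_zpow {x : G} {n : ℕ} [NeZero n] (hx : x ^ n = 1) (j : ℤ) :
    ∃ r : Fin n, x ^ (r : ℕ) = x ^ j := by
  have hn : (0 : ℤ) < n := by have := NeZero.pos n; omega
  refine ⟨⟨(j % n).toNat, by have := Int.emod_lt_of_pos j hn; omega⟩, ?_⟩
  rw [← zpow_natCast, Int.toNat_of_nonneg (Int.emod_nonneg j hn.ne'), ← zpow_eq_zpow_emod' j hx]

theorem exists_eq_pow_mul_pow_mul_pow_of_mem_closure {p q : ℕ} (ha : a ^ 2 = 1)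
    (hb : b ^ (p + 1) = 1) (hc : c ^ (q + 1) = 1) (hab : (a * b) ^ 2 = 1)
    (hac : (a * c) ^ 2 = 1) (hbc : Commute b c) {g : G} (hg : g ∈ Subgroup.closure {a, b, c}) :
    ∃ t : Fin 2 × Fin (p + 1) × Fin (q + 1),
      g = a ^ (t.1 : ℕ) * b ^ (t.2.1 : ℕ) * c ^ (t.2.2 : ℕ) := by
  obtain ⟨i, j, l, rfl⟩ := exists_eq_zpow_mul_zpow_mul_zpow_of_mem_closure ha hab hac hbc hg
  obtain ⟨r, hr⟩ := exists_fin_pow_eq_zpow ha i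
  obtain ⟨s, hs⟩ := exists_fin_pow_eq_zpow hb j
  obtain ⟨u, hu⟩ := exists_fin_pow_eq_zpow hc l
  exact ⟨(r, s, u), by rw [hr, hs, hu]⟩

end DihedralWords

namespace Matrix

variable {l m α : Type*} [Fintype l] [Fintype m] [DecidableEq l] [DecidableEq m] [Semiring α]

def fromBlocksDiagonalHom : Matrix l l α × Matrix m m α →* Matrix (l ⊕ m) (l ⊕ m) α where
  toFun X := fromBlocks X.1 0 0 X.2
  map_one' := fromBlocks_one
  map_mul' X Y := by simp [fromBlocks_multiply]

theorem fromBlocksDiagonalHom_injective :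
    Function.Injective (fromBlocksDiagonalHom : Matrix l l α × Matrix m m α →* _) :=
  fun X Y h => by simpa [fromBlocksDiagonalHom, fromBlocks_inj, Prod.ext_iff] using h

def finFromBlocksDiagonalHom (p q : ℕ) :
    Matrix (Fin p) (Fin p) α × Matrix (Fin q) (Fin q) α →*
      Matrix (Fin (p + q)) (Fin (p + q)) α :=
  (reindexRingEquiv α finSumFinEquiv).toMonoidHom.comp fromBlocksDiagonalHom

theorem finFromBlocksDiagonalHom_injective (p q : ℕ) :
    Function.Injective (finFromBlocksDiagonalHom (α := α) p q) :=
  (reindexRingEquiv α finSumFinEquiv).injective.comp fromBlocksDiagonalHom_injective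

end Matrix

namespace Lawson

noncomputable def rotationMatrix (θ : ℝ) : Matrix (Fin 2) (Fin 2) ℝ :=
  !![cos θ, -sin θ; sin θ, cos θ]

def reflectionMatrix : Matrix (Fin 2) (Fin 2) ℝ := !![-1, 0; 0, 1]

theorem rotationMatrix_eq_leftMulMatrix (θ : ℝ) :
    rotationMatrix θ = Algebra.leftMulMatrix Complex.basisOneI (Complex.exp (θ * Complex.I)) := by
  rw [Algebra.leftMulMatrix_complex, Complex.exp_ofReal_mul_I_re, Complex.exp_ofReal_mul_I_im,
    rotationMatrix]

theorem orderOf_rotationMatrix (n : ℕ) [NeZero n] :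
    orderOf (rotationMatrix (2 * π / n)) = n := by
  have hζ : Complex.exp (↑(2 * π / n) * Complex.I) = Complex.exp (2 * π * Complex.I / n) := by
    push_cast; ring_nf
  rw [rotationMatrix_eq_leftMulMatrix, hζ]
  exact (orderOf_injective (Algebra.leftMulMatrix Complex.basisOneI).toMonoidHom
    (Algebra.leftMulMatrix_injective _) _).trans
    (Complex.isPrimitiveRoot_exp n (NeZero.ne n)).eq_orderOf.symm

theorem rotationMatrix_pow_eq_one (n : ℕ) [NeZero n] : rotationMatrix (2 * π / n) ^ n = 1 := by
  simpa only [orderOf_rotationMatrix] using pow_orderOf_eq_one (rotationMatrix (2 * π / n))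

theorem det_rotationMatrix (θ : ℝ) : (rotationMatrix θ).det = 1 := by
  simp [rotationMatrix, det_fin_two_of, ← sq, cos_sq_add_sin_sq]

theorem det_reflectionMatrix : reflectionMatrix.det = -1 := by
  simp [reflectionMatrix, det_fin_two_of]

theorem reflectionMatrix_sq : reflectionMatrix ^ 2 = 1 := by
  simp [reflectionMatrix, sq, one_fin_two]

theorem reflectionMatrix_mul_rotationMatrix_sq (θ : ℝ) :
    (reflectionMatrix * rotationMatrix θ) ^ 2 = 1 := by
  rw [sq]
  simp only [reflectionMatrix, rotationMatrix, mul_fin_two, one_fin_two, neg_mul, one_mul,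
    zero_mul, add_zero, mul_neg, neg_neg, zero_add, neg_zero, EmbeddingLike.apply_eq_iff_eq,
    vecCons_inj, and_true]
  refine ⟨⟨?_, by ring⟩, by ring, ?_⟩ <;> linear_combination cos_sq_add_sin_sq θ

theorem reflectionMatrix_pow_mul_rotationMatrix_pow_injective (n : ℕ) [NeZero n] :
    Function.Injective fun t : Fin 2 × Fin n =>
      reflectionMatrix ^ (t.1 : ℕ) * rotationMatrix (2 * π / n) ^ (t.2 : ℕ) := by
  rintro ⟨i, j⟩ ⟨i', j'⟩ h
  have hi : i = i' := by
    have := congrArg det h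
    simp only [det_mul, det_pow, det_reflectionMatrix, det_rotationMatrix, one_pow, mul_one] at this
    fin_cases i <;> fin_cases i' <;> norm_num at this <;> rfl
  subst hi
  have hunit : IsUnit (reflectionMatrix ^ (i : ℕ)) :=
    (IsUnit.of_mul_eq_one _ (by rw [← sq, reflectionMatrix_sq])).pow _
  have hj := pow_injOn_Iio_orderOf (x := rotationMatrix (2 * π / n))
    (by simp [orderOf_rotationMatrix]) (by simp [orderOf_rotationMatrix]) (hunit.mul_left_cancel h)
  exact Prod.ext rfl (Fin.ext hj)

structure IsGenerators (k m : ℕ) (a b c : GL (Fin 4) ℝ) : Prop where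
  val_a : (a : Matrix (Fin 4) (Fin 4) ℝ) =
    finFromBlocksDiagonalHom 2 2 (reflectionMatrix, reflectionMatrix)
  val_b : (b : Matrix (Fin 4) (Fin 4) ℝ) =
    finFromBlocksDiagonalHom 2 2 (rotationMatrix (2 * π / (k + 1 : ℕ)), 1)
  val_c : (c : Matrix (Fin 4) (Fin 4) ℝ) =
    finFromBlocksDiagonalHom 2 2 (1, rotationMatrix (2 * π / (m + 1 : ℕ)))

namespace IsGenerators

variable {k m : ℕ} {a b c : GL (Fin 4) ℝ}

theorem sq_a (h : IsGenerators k m a b c) : a ^ 2 = 1 := Units.ext <| by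
  simp only [Units.val_pow_eq_pow_val, h.val_a, ← map_pow, Prod.pow_mk, reflectionMatrix_sq,
    Prod.mk_one_one, map_one, Units.val_one]

theorem pow_b (h : IsGenerators k m a b c) : b ^ (k + 1) = 1 := Units.ext <| by
  simp only [Units.val_pow_eq_pow_val, h.val_b, ← map_pow, Prod.pow_mk, rotationMatrix_pow_eq_one,
    one_pow, Prod.mk_one_one, map_one, Units.val_one]

theorem pow_c (h : IsGenerators k m a b c) : c ^ (m + 1) = 1 := Units.ext <| by
  simp only [Units.val_pow_eq_pow_val, h.val_c, ← map_pow, Prod.pow_mk, rotationMatrix_pow_eq_one,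
    one_pow, Prod.mk_one_one, map_one, Units.val_one]

theorem mul_b_sq (h : IsGenerators k m a b c) : (a * b) ^ 2 = 1 := Units.ext <| by
  simp only [Units.val_pow_eq_pow_val, Units.val_mul, h.val_a, h.val_b, ← map_pow, ← map_mul,
    Prod.pow_mk, Prod.mk_mul_mk, mul_one, reflectionMatrix_sq,
    reflectionMatrix_mul_rotationMatrix_sq, Prod.mk_one_one, map_one, Units.val_one]

theorem mul_c_sq (h : IsGenerators k m a b c) : (a * c) ^ 2 = 1 := Units.ext <| by
  simp only [Units.val_pow_eq_pow_val, Units.val_mul, h.val_a, h.val_c, ← map_pow, ← map_mul,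
    Prod.pow_mk, Prod.mk_mul_mk, mul_one, reflectionMatrix_sq,
    reflectionMatrix_mul_rotationMatrix_sq, Prod.mk_one_one, map_one, Units.val_one]

theorem commute_b_c (h : IsGenerators k m a b c) : Commute b c := Units.ext <| by
  simp only [Units.val_mul, h.val_b, h.val_c, ← map_mul, Prod.mk_mul_mk, mul_one, one_mul]

theorem val_pow_mul_pow_mul_pow (h : IsGenerators k m a b c) (i j l : ℕ) :
    ((a ^ i * b ^ j * c ^ l : GL (Fin 4) ℝ) : Matrix (Fin 4) (Fin 4) ℝ) =
      finFromBlocksDiagonalHom 2 2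
        (reflectionMatrix ^ i * rotationMatrix (2 * π / (k + 1 : ℕ)) ^ j,
          reflectionMatrix ^ i * rotationMatrix (2 * π / (m + 1 : ℕ)) ^ l) := by
  simp only [Units.val_pow_eq_pow_val, Units.val_mul, h.val_a, h.val_b, h.val_c, ← map_pow,
    ← map_mul, Prod.pow_mk, Prod.mk_mul_mk, mul_one, one_pow]

theorem pow_mul_pow_mul_pow_injective (h : IsGenerators k m a b c) :
    Function.Injective fun t : Fin 2 × Fin (k + 1) × Fin (m + 1) =>
      a ^ (t.1 : ℕ) * b ^ (t.2.1 : ℕ) * c ^ (t.2.2 : ℕ) := by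
  intro s t hst
  obtain ⟨hb, hc⟩ := Prod.ext_iff.mp <| finFromBlocksDiagonalHom_injective 2 2 <|
    (h.val_pow_mul_pow_mul_pow ..).symm.trans <|
      (congrArg Units.val hst).trans (h.val_pow_mul_pow_mul_pow ..)
  obtain ⟨hi, hj⟩ := Prod.ext_iff.mp <|
    reflectionMatrix_pow_mul_rotationMatrix_pow_injective (k + 1) (a₁ := (s.1, s.2.1))
      (a₂ := (t.1, t.2.1)) hb
  obtain ⟨-, hl⟩ := Prod.ext_iff.mp <|
    reflectionMatrix_pow_mul_rotationMatrix_pow_injective (m + 1) (a₁ := (s.1, s.2.2))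
      (a₂ := (t.1, t.2.2)) hc
  exact Prod.ext hi (Prod.ext hj hl)

end IsGenerators

end Lawson

open Lawson

theorem stmt10_general (m k : ℕ) (gAA gBI gIC : GL (Fin 4) ℝ) :
    let A : Matrix (Fin 2) (Fin 2) ℝ := !![-1, 0; 0, 1]
    let R : ℝ → Matrix (Fin 2) (Fin 2) ℝ :=
      fun a => !![Real.cos a, -Real.sin a; Real.sin a, Real.cos a]
    let B : Matrix (Fin 2) (Fin 2) ℝ := R (2 * π / (k + 1))
    let C : Matrix (Fin 2) (Fin 2) ℝ := R (2 * π / (m + 1))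
    let blk : Matrix (Fin 2) (Fin 2) ℝ → Matrix (Fin 2) (Fin 2) ℝ →
        Matrix (Fin 4) (Fin 4) ℝ :=
      fun X Y => Matrix.reindex finSumFinEquiv finSumFinEquiv (Matrix.fromBlocks X 0 0 Y)
    (gAA : Matrix (Fin 4) (Fin 4) ℝ) = blk A A →
    (gBI : Matrix (Fin 4) (Fin 4) ℝ) = blk B 1 →
    (gIC : Matrix (Fin 4) (Fin 4) ℝ) = blk 1 C →
    ∀ g ∈ Subgroup.closure {gAA, gBI, gIC},
      ∃! t : Fin 2 × Fin (k + 1) × Fin (m + 1),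
        g = gAA ^ (t.1 : ℕ) * gBI ^ (t.2.1 : ℕ) * gIC ^ (t.2.2 : ℕ) := by
  intro A R B C blk hAA hBI hIC g hg
  have h : IsGenerators k m gAA gBI gIC :=
    ⟨hAA, by rw [Nat.cast_add_one]; exact hBI, by rw [Nat.cast_add_one]; exact hIC⟩
  obtain ⟨t, rfl⟩ := exists_eq_pow_mul_pow_mul_pow_of_mem_closure h.sq_a h.pow_b h.pow_c
    h.mul_b_sq h.mul_c_sq h.commute_b_c hg
  exact ⟨t, rfl, fun s hs => h.pow_mul_pow_mul_pow_injective hs.symm⟩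

/-- Every element of the Lawson reflection group `G = ⟨(A,A),(B,I),(I,C)⟩ ⊂ O(4)`
admits a unique expression `(A,A)^i (B,I)^j (I,C)^ℓ` with `i ∈ {0,1}`, `0 ≤ j ≤ k`,
`0 ≤ ℓ ≤ m`. -/
theorem stmt10 (m k : ℕ) (hm : 1 ≤ m) (hk : 1 ≤ k) (gAA gBI gIC : GL (Fin 4) ℝ) :
    let A : Matrix (Fin 2) (Fin 2) ℝ := !![-1, 0; 0, 1]
    let R : ℝ → Matrix (Fin 2) (Fin 2) ℝ :=
      fun a => !![Real.cos a, -Real.sin a; Real.sin a, Real.cos a]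
    let B : Matrix (Fin 2) (Fin 2) ℝ := R (2 * π / (k + 1))
    let C : Matrix (Fin 2) (Fin 2) ℝ := R (2 * π / (m + 1))
    let blk : Matrix (Fin 2) (Fin 2) ℝ → Matrix (Fin 2) (Fin 2) ℝ →
        Matrix (Fin 4) (Fin 4) ℝ :=
      fun X Y => Matrix.reindex finSumFinEquiv finSumFinEquiv (Matrix.fromBlocks X 0 0 Y)
    (gAA : Matrix (Fin 4) (Fin 4) ℝ) = blk A A →
    (gBI : Matrix (Fin 4) (Fin 4) ℝ) = blk B 1 →
    (gIC : Matrix (Fin 4) (Fin 4) ℝ) = blk 1 C →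
    ∀ g ∈ Subgroup.closure {gAA, gBI, gIC},
      ∃! t : Fin 2 × Fin (k + 1) × Fin (m + 1),
        g = gAA ^ (t.1 : ℕ) * gBI ^ (t.2.1 : ℕ) * gIC ^ (t.2.2 : ℕ) :=
  stmt10_general m k gAA gBI gIC
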